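/- For any a > 0 and 0 < p ≤ 1, the function f(x) = a·x^p on ℝ_{>0} is concave and log-log concave, and for any t > 0, the function x ↦ f(t) − f(t − x) is log-log convex on (0, t). -/

import Mathlib

open Real Set

lemma key1 {s t p : ℝ} (hs : 0 < s) (hst : s < t) (hp0 : 0 < p) (hp1 : p ≤ 1) :
    s ^ p ≤ p * s * t ^ (p - 1) + (1 - p) * t ^ p := by
  have ht : 0 < t := hs.trans hst
  have hgm : s ^ p * t ^ (1 - p) ≤ p * s + (1 - p) * t :=
    Real.geom_mean_le_arith_mean2_weighted hp0.le (by linarith) hs.le ht.le (by ring)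
  have h1 : t ^ (p - 1) = t ^ p / t := by rw [Real.rpow_sub ht, Real.rpow_one]
  have h2 : t ^ (1 - p) = t / t ^ p := by rw [Real.rpow_sub ht, Real.rpow_one]
  have hTp : 0 < t ^ p := Real.rpow_pos_of_pos ht p
  rw [h1]; rw [h2] at hgm
  have := mul_le_mul_of_nonneg_right hgm (le_of_lt (by positivity : (0:ℝ) < t ^ p / t))
  calc s ^ p = s ^ p * (t / t ^ p) * (t ^ p / t) := by field_simp
    _ ≤ (p * s + (1 - p) * t) * (t ^ p / t) := this
    _ = p * s * (t ^ p / t) + (1 - p) * t ^ p := by field_simp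

lemma key2 {s t p : ℝ} (hs : 0 < s) (hst : s < t) (hp0 : 0 < p) (hp1 : p ≤ 1) :
    0 ≤ (s + (1 - p) * (t - s)) * (t ^ p - s ^ p) - p * (t - s) * s ^ p := by
  have ht : 0 < t := hs.trans hst
  have k1 := key1 hs hst hp0 hp1
  have h1 : t ^ (p - 1) = t ^ p / t := by rw [Real.rpow_sub ht, Real.rpow_one]
  rw [h1] at k1
  have k2 : t * s ^ p ≤ p * s * t ^ p + (1 - p) * (t * t ^ p) := by
    have := mul_le_mul_of_nonneg_left k1 ht.le
    calc t * s ^ p ≤ t * (p * s * (t ^ p / t) + (1 - p) * t ^ p) := this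
      _ = p * s * t ^ p + (1 - p) * (t * t ^ p) := by field_simp
  nlinarith [k2]

lemma part3 (a p : ℝ) (ha : 0 < a) (hp0 : 0 < p) (hp1 : p ≤ 1) (t : ℝ) (ht : 0 < t) :
    ConvexOn ℝ (Set.Iio (Real.log t))
      (fun x => Real.log (a * t ^ p - a * (t - Real.exp x) ^ p)) := by
  set F' : ℝ → ℝ := fun x =>
    p * Real.exp x * (t - Real.exp x) ^ (p - 1) / (t ^ p - (t - Real.exp x) ^ p) with hF'def
  set F'' : ℝ → ℝ := fun x =>
    ((p * (Real.exp x * (t - Real.exp x) ^ (p - 1) +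
        Real.exp x * ((p - 1) * (t - Real.exp x) ^ (p - 1 - 1) * -Real.exp x))) *
      (t ^ p - (t - Real.exp x) ^ p) -
      p * Real.exp x * (t - Real.exp x) ^ (p - 1) * (p * (t - Real.exp x) ^ (p - 1) * Real.exp x)) /
      (t ^ p - (t - Real.exp x) ^ p) ^ 2 with hF''def
  -- basic facts on the domain
  have hmem : ∀ x : ℝ, x ∈ Set.Iio (Real.log t) →
      0 < Real.exp x ∧ 0 < t - Real.exp x ∧ t - Real.exp x < t ∧
      0 < t ^ p - (t - Real.exp x) ^ p := by
    intro x hx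
    have hw : Real.exp x < t := by
      calc Real.exp x < Real.exp (Real.log t) := Real.exp_lt_exp.2 hx
        _ = t := Real.exp_log ht
    have hs : 0 < t - Real.exp x := by linarith
    have hst : t - Real.exp x < t := by have := Real.exp_pos x; linarith
    exact ⟨Real.exp_pos x, hs, hst,
      sub_pos.2 (Real.rpow_lt_rpow hs.le hst hp0)⟩
  apply convexOn_of_hasDerivWithinAt2_nonneg (f' := F') (f'' := F'') (convex_Iio _)
  · -- continuity
    apply ContinuousOn.log
    · exact (continuous_const.sub (continuous_const.mul
        ((continuous_const.sub Real.continuous_exp).rpow_const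
          fun x => Or.inr hp0.le))).continuousOn
    · intro x hx
      obtain ⟨hw, hs, hst, hD⟩ := hmem x hx
      nlinarith [hD]
  · -- first derivative
    rw [interior_Iio]
    intro x hx
    obtain ⟨hw, hs, hst, hD⟩ := hmem x hx
    have h1 : HasDerivAt (fun y => t - Real.exp y) (-Real.exp x) x :=
      (Real.hasDerivAt_exp x).const_sub t
    have h2 := h1.rpow_const (p := p) (Or.inl hs.ne')
    have h4 : HasDerivAt (fun y => a * t ^ p - a * (t - Real.exp y) ^ p)
        (-(a * (p * (t - Real.exp x) ^ (p - 1) * -Real.exp x))) x := by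
      have := (h2.const_mul a).const_sub (a * t ^ p)
      exact this.congr_deriv (by ring)
    have hne : a * t ^ p - a * (t - Real.exp x) ^ p ≠ 0 := by nlinarith [hD]
    have h5 := h4.log hne
    have heq : -(a * (p * (t - Real.exp x) ^ (p - 1) * -Real.exp x)) /
        (a * t ^ p - a * (t - Real.exp x) ^ p) = F' x := by
      rw [hF'def]
      rw [show a * t ^ p - a * (t - Real.exp x) ^ p
          = a * (t ^ p - (t - Real.exp x) ^ p) by ring,
        show -(a * (p * (t - Real.exp x) ^ (p - 1) * -Real.exp x))
          = a * (p * Real.exp x * (t - Real.exp x) ^ (p - 1)) by ring]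
      exact mul_div_mul_left _ _ ha.ne'
    rw [heq] at h5
    exact h5.hasDerivWithinAt
  · -- second derivative
    rw [interior_Iio]
    intro x hx
    obtain ⟨hw, hs, hst, hD⟩ := hmem x hx
    have h1 : HasDerivAt (fun y => t - Real.exp y) (-Real.exp x) x :=
      (Real.hasDerivAt_exp x).const_sub t
    have hN : HasDerivAt (fun y => p * Real.exp y * (t - Real.exp y) ^ (p - 1))
        (p * (Real.exp x * (t - Real.exp x) ^ (p - 1) +
          Real.exp x * ((p - 1) * (t - Real.exp x) ^ (p - 1 - 1) * -Real.exp x))) x := by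
      have hpow := h1.rpow_const (p := p - 1) (Or.inl hs.ne')
      have := ((Real.hasDerivAt_exp x).mul hpow).const_mul p
      exact (this.congr_deriv (by ring)).congr_of_eventuallyEq
        (Filter.Eventually.of_forall fun y => by simp only [Pi.mul_apply]; ring)
    have hDd : HasDerivAt (fun y => t ^ p - (t - Real.exp y) ^ p)
        (p * (t - Real.exp x) ^ (p - 1) * Real.exp x) x := by
      have h2 := h1.rpow_const (p := p) (Or.inl hs.ne')
      have := h2.const_sub (t ^ p)
      exact this.congr_deriv (by ring)
    have hdiv := hN.div hDd (ne_of_gt hD)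
    have : HasDerivAt F' (F'' x) x := by
      rw [hF''def]
      exact hdiv.congr_of_eventuallyEq (Filter.Eventually.of_forall fun y => rfl)
    exact this.hasDerivWithinAt
  · -- nonnegativity of F''
    rw [interior_Iio]
    intro x hx
    obtain ⟨hw, hs, hst, hD⟩ := hmem x hx
    rw [hF''def]
    dsimp only
    set w := Real.exp x
    set s := t - w with hsdef
    have e1 : s ^ (p - 1) = s ^ p / s := by rw [Real.rpow_sub hs, Real.rpow_one]
    have e2 : s ^ (p - 1 - 1) = s ^ p / s / s := by
      rw [Real.rpow_sub hs, Real.rpow_sub hs, Real.rpow_one]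
    have key := key2 hs hst hp0 hp1
    rw [show t - s = w from by rw [hsdef]; ring] at key
    have hA : 0 < s ^ p := Real.rpow_pos_of_pos hs p
    have hnum : (p * (w * s ^ (p - 1) + w * ((p - 1) * s ^ (p - 1 - 1) * -w))) *
        (t ^ p - s ^ p) - p * w * s ^ (p - 1) * (p * s ^ (p - 1) * w)
        = (p * w * s ^ p / (s * s)) *
          ((s + (1 - p) * w) * (t ^ p - s ^ p) - p * w * s ^ p) := by
      rw [e1, e2]
      field_simp
      ring
    apply div_nonneg _ (sq_nonneg _)
    rw [hnum]
    exact mul_nonneg (by positivity) key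


theorem stmt7 (a p : ℝ) (ha : 0 < a) (hp0 : 0 < p) (hp1 : p ≤ 1) :
    ConcaveOn ℝ (Set.Ioi 0) (fun x : ℝ => a * x ^ p) ∧
    ConcaveOn ℝ Set.univ (fun x => Real.log (a * Real.exp x ^ p)) ∧
    ∀ t > (0:ℝ), ConvexOn ℝ (Set.Iio (Real.log t))
      (fun x => Real.log (a * t ^ p - a * (t - Real.exp x) ^ p)) := by
  refine ⟨?_, ?_, fun t ht => part3 a p ha hp0 hp1 t ht⟩
  · have h := ((Real.concaveOn_rpow hp0.le hp1).smul ha.le).subset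
      Set.Ioi_subset_Ici_self (convex_Ioi 0)
    simpa [smul_eq_mul] using h
  · have heq : ∀ x : ℝ, Real.log (a * Real.exp x ^ p) = Real.log a + p * x := by
      intro x
      rw [Real.log_mul ha.ne' (Real.rpow_pos_of_pos (Real.exp_pos x) p).ne',
        Real.log_rpow (Real.exp_pos x), Real.log_exp]
    simp only [heq]
    refine ⟨convex_univ, ?_⟩
    intro x _ y _ μ ν hμ hν h1
    simp only [smul_eq_mul]
    apply le_of_eq
    linear_combination Real.log a * h1
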